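/- Let n ≥ 1 and let w, x ∈ [0,1]^n with w_j ≠ 1/2 and x_j ≠ 1/2 for every j. Then harden(max_{j} ∂∧(w_j, x_j)) = 1 if and only if there exists j with harden(w_j) = 1 and harden(x_j) = 1; i.e. the ∂∨-neuron (w, x) ↦ max(∂∧(w_1,x_1),…,∂∧(w_n,x_n)) is hard-equivalent to the boolean function ⋁_{j=1}^n (w_j ∧ x_j), which computes the disjunction of exactly those inputs x_j selected by a high weight w_j. -/
import Mathlib


/-- `harden` maps a soft-bit to a hard-bit: 1 if `x > 1/2`, else 0. -/
noncomputable def harden (x : ℝ) : ℕ := if x > 1/2 then 1 else 0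

/-- `augmentedBit x i = 1/2 + x̄·|x i − 1/2|` if `x i > 1/2`, else `x i + x̄·|x i − 1/2|`,
where `x̄` is the mean of the entries of `x`. -/
noncomputable def augmentedBit {n : ℕ} (x : Fin n → ℝ) (i : Fin n) : ℝ :=
  let xbar := (∑ j, x j) / n
  let mf := xbar * |x i - 1/2|
  if x i > 1/2 then 1/2 + mf else x i + mf

/-- `∂∧(a,b)`: the augmented bit of the two-element vector `[a,b]` at an index of a minimal
entry. -/
noncomputable def dAnd (a b : ℝ) : ℝ := augmentedBit ![a, b] (if a ≤ b then 0 else 1)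

lemma dAnd_gt_iff (a b : ℝ) (ha : a ∈ Set.Icc (0:ℝ) 1) (hb : b ∈ Set.Icc (0:ℝ) 1)
    (ha2 : a ≠ 1/2) (hb2 : b ≠ 1/2) :
    dAnd a b > 1/2 ↔ a > 1/2 ∧ b > 1/2 := by
  obtain ⟨ha0, ha1⟩ := ha
  obtain ⟨hb0, hb1⟩ := hb
  unfold dAnd augmentedBit
  by_cases hab : a ≤ b
  · simp only [hab, if_true]
    simp only [Fin.sum_univ_two, Matrix.cons_val_zero, Matrix.cons_val_one, Matrix.head_cons,
      Nat.cast_ofNat]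
    by_cases hgt : a > 1/2
    · rw [if_pos hgt]
      have hba : b > 1/2 := lt_of_lt_of_le hgt hab
      have h1 : |a - 1/2| = a - 1/2 := abs_of_pos (by linarith)
      rw [h1]
      constructor
      · intro _; exact ⟨hgt, hba⟩
      · intro _; nlinarith
      
    · rw [if_neg hgt]
      have halt : a < 1/2 := lt_of_le_of_ne (not_lt.mp hgt) ha2
      have h1 : |a - 1/2| = 1/2 - a := by rw [abs_of_neg (by linarith)]; ring
      rw [h1]
      constructor
      · intro h; exfalso; nlinarith
      · intro ⟨h, _⟩; exact absurd h hgt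
  · simp only [hab, if_false]
    simp only [Fin.sum_univ_two, Matrix.cons_val_zero, Matrix.cons_val_one, Matrix.head_cons,
      Nat.cast_ofNat]
    have hba : b < a := not_le.mp hab
    by_cases hgt : b > 1/2
    · rw [if_pos hgt]
      have h1 : |b - 1/2| = b - 1/2 := abs_of_pos (by linarith)
      rw [h1]
      constructor
      · intro _; exact ⟨lt_trans hgt hba, hgt⟩
      · intro _; nlinarith
    · rw [if_neg hgt]
      have hblt : b < 1/2 := lt_of_le_of_ne (not_lt.mp hgt) hb2
      have h1 : |b - 1/2| = 1/2 - b := by rw [abs_of_neg (by linarith)]; ring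
      rw [h1]
      constructor
      · intro h; exfalso; nlinarith
      · intro ⟨_, h⟩; exact absurd h hgt

/-- The `∂∨`-neuron `(w,x) ↦ max_j ∂∧(w_j, x_j)` is hard-equivalent to
`⋁_j (w_j ∧ x_j)`. -/
theorem stmt16 (n : ℕ) (hn : 1 ≤ n) (w x : Fin n → ℝ)
    (hw : ∀ j, w j ∈ Set.Icc (0:ℝ) 1) (hx : ∀ j, x j ∈ Set.Icc (0:ℝ) 1)
    (hw2 : ∀ j, w j ≠ 1/2) (hx2 : ∀ j, x j ≠ 1/2) :
    harden (Finset.univ.sup'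
        (Finset.univ_nonempty_iff.mpr (Fin.pos_iff_nonempty.mp hn))
        (fun j => dAnd (w j) (x j))) = 1 ↔
      ∃ j, harden (w j) = 1 ∧ harden (x j) = 1 := by
  have h1 : ∀ y : ℝ, harden y = 1 ↔ y > 1/2 := by
    intro y; unfold harden; split <;> rename_i h <;> simpa using h
  simp only [h1]
  rw [gt_iff_lt, Finset.lt_sup'_iff]
  constructor
  · rintro ⟨j, -, hj⟩
    exact ⟨j, (dAnd_gt_iff _ _ (hw j) (hx j) (hw2 j) (hx2 j)).mp hj⟩
  · rintro ⟨j, hj1, hj2⟩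
    exact ⟨j, Finset.mem_univ j, (dAnd_gt_iff _ _ (hw j) (hx j) (hw2 j) (hx2 j)).mpr ⟨hj1, hj2⟩⟩
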